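/- Suppose e_1, …, e_M satisfy the Richardson equations at coupling g, that the cluster condition M_k = 1 − 2d_k holds, and that max_{α∈C} |x_α| < |2η_k − 2η_j| for all j ≠ k and max_{α∈C} |x_α| < |2η_k − e_β| for all β ∉ C. Then for every integer p ≥ 2 the series Σ_{n=0}^∞ S_{p+n}·P_n converges absolutely and S_p − 2g·(M_k + 1 − p)·S_{p−1} − 2g·Σ_{i=1}^{p−2} S_{p−i−1}·S_i + 4g·Σ_{n=0}^∞ S_{p+n}·P_n = 0. -/

import Mathlib

/-!
Write `x_α = 2η_k - e_α`. Multiplying the Richardson equation at `α ∈ C` by `x_α ^ p` and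
summing over the cluster, the pole at `2η_k` contributes `-4g d_k S_{p-1}`. The remaining
poles and the roots outside `C` are farther from `2η_k` than every `x_α`, so their terms expand
into geometric series in `x_α` and give `Σ_n S_{p+n} P_n`. In the intra-cluster terms, pairing
`(α, β)` with `(β, α)` produces `(x_α^p - x_β^p) / (x_β - x_α)`, a geometric sum, which turns the
double sum into products of power sums. The cluster condition `M_k = 1 - 2d_k` then merges the
two multiples of `S_{p-1}`.
-/

open Finset

theorem hasSum_pow_add_div_pow_succ {K : Type*} [NormedField K] {x w : K} (h : ‖x‖ < ‖w‖)
    (m : ℕ) : HasSum (fun n ↦ x ^ (m + n) / w ^ (n + 1)) (x ^ m / (w - x)) := by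
  have hw : w ≠ 0 := norm_pos_iff.mp ((norm_nonneg x).trans_lt h)
  have hwx : w - x ≠ 0 := sub_ne_zero.mpr fun hwx ↦ h.ne (by rw [hwx])
  have hr : ‖x / w‖ < 1 := by rwa [norm_div, div_lt_one (norm_pos_iff.mpr hw)]
  have hterm : (fun n ↦ x ^ (m + n) / w ^ (n + 1)) = fun n ↦ x ^ m / w * (x / w) ^ n := by
    ext n
    rw [div_pow, pow_add, pow_succ]
    field_simp
  have hsum : x ^ m / (w - x) = x ^ m / w * (1 - x / w)⁻¹ := by
    rw [one_sub_div hw, inv_div]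
    field_simp
  rw [hterm, hsum]
  exact (hasSum_geometric_of_norm_lt_one hr).mul_left _

theorem hasSum_pow_add_mul_sum_div_pow_succ {K ι : Type*} [NormedField K] (s : Finset ι)
    (c w : ι → K) {x : K} (h : ∀ j ∈ s, ‖x‖ < ‖w j‖) (m : ℕ) :
    HasSum (fun n ↦ x ^ (m + n) * ∑ j ∈ s, c j / w j ^ (n + 1))
      (x ^ m * ∑ j ∈ s, c j / (w j - x)) := by
  simpa only [mul_sum, mul_div_assoc', mul_comm] using
    hasSum_sum fun j hj ↦ (hasSum_pow_add_div_pow_succ (h j hj) m).mul_left (c j)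

def powerSum {ι K : Type*} [CommSemiring K] (s : Finset ι) (x : ι → K) (i : ℕ) : K :=
  ∑ a ∈ s, x a ^ i

@[simp]
theorem powerSum_zero {ι K : Type*} [CommSemiring K] (s : Finset ι) (x : ι → K) :
    powerSum s x 0 = #s := by
  simp [powerSum]

theorem sum_sum_erase_mul {ι R : Type*} [DecidableEq ι] [CommRing R] (s : Finset ι)
    (f g : ι → R) :
    ∑ a ∈ s, ∑ b ∈ s.erase a, f a * g b = (∑ a ∈ s, f a) * ∑ b ∈ s, g b - ∑ a ∈ s, f a * g a := by
  rw [sum_mul_sum, ← sum_sub_distrib]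
  exact sum_congr rfl fun a ha ↦ by rw [sum_erase_eq_sub ha]

theorem sum_sum_erase_comm {ι M : Type*} [DecidableEq ι] [AddCommMonoid M] (s : Finset ι)
    (f : ι → ι → M) : ∑ a ∈ s, ∑ b ∈ s.erase a, f a b = ∑ a ∈ s, ∑ b ∈ s.erase a, f b a :=
  sum_comm' fun a b ↦ by simp only [mem_erase]; grind

theorem sum_range_add_two {M : Type*} [AddCommMonoid M] (f : ℕ → M) (q : ℕ) :
    ∑ i ∈ range (q + 2), f i = f 0 + ∑ i ∈ Icc 1 q, f i + f (q + 1) := by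
  rw [range_eq_Ico, sum_eq_sum_Ico_succ_bot (by omega), sum_Ico_succ_top (by omega),
    Ico_add_one_right_eq_Icc, add_assoc]

theorem two_mul_sum_sum_erase_pow_div_sub {ι K : Type*} [DecidableEq ι] [Field K] {s : Finset ι}
    {x : ι → K} (hx : Set.InjOn x s) (p : ℕ) :
    2 * ∑ a ∈ s, ∑ b ∈ s.erase a, x a ^ p / (x b - x a)
      = p * powerSum s x (p - 1) - ∑ i ∈ range p, powerSum s x i * powerSum s x (p - 1 - i) := by
  have hpair : ∀ a ∈ s, ∀ b ∈ s.erase a, x a ^ p / (x b - x a) + x b ^ p / (x a - x b)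
      = -∑ i ∈ range p, x a ^ i * x b ^ (p - 1 - i) := by
    intro a ha b hb
    have hab : x a - x b ≠ 0 :=
      sub_ne_zero.mpr fun h ↦ (ne_of_mem_erase hb) (hx (mem_of_mem_erase hb) ha h.symm)
    rw [← neg_sub (x a), div_neg, neg_add_eq_sub, div_sub_div_same, div_eq_iff hab]
    linear_combination geom_sum₂_mul (x a) (x b) p
  have hdiag : ∀ i ∈ range p, ∑ a ∈ s, ∑ b ∈ s.erase a, x a ^ i * x b ^ (p - 1 - i)
      = powerSum s x i * powerSum s x (p - 1 - i) - powerSum s x (p - 1) := by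
    intro i hi
    rw [sum_sum_erase_mul, powerSum, powerSum, powerSum]
    congr 1
    exact sum_congr rfl fun a _ ↦ by
      rw [← pow_add, Nat.add_sub_cancel' (Nat.le_sub_one_of_lt (mem_range.mp hi))]
  calc 2 * ∑ a ∈ s, ∑ b ∈ s.erase a, x a ^ p / (x b - x a)
      = ∑ a ∈ s, ∑ b ∈ s.erase a, (x a ^ p / (x b - x a) + x b ^ p / (x a - x b)) := by
        rw [two_mul]
        nth_rewrite 2 [sum_sum_erase_comm]
        simp only [← sum_add_distrib]
    _ = -∑ i ∈ range p, ∑ a ∈ s, ∑ b ∈ s.erase a, x a ^ i * x b ^ (p - 1 - i) := by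
        rw [sum_congr rfl fun a ha ↦ sum_congr rfl (hpair a ha)]
        simp only [sum_neg_distrib]
        rw [sum_congr rfl fun a _ ↦ sum_comm, sum_comm]
    _ = _ := by
        rw [sum_congr rfl hdiag, sum_sub_distrib, sum_const, card_range, nsmul_eq_mul]
        ring

section Richardson

variable {K ι J : Type*} [Fintype ι] [DecidableEq ι] [Fintype J] [DecidableEq J]

def IsRichardsonSolution [Field K] (v d : J → K) (g : K) (e : ι → K) : Prop :=
  ∀ α, 1 - 4 * g * ∑ j, d j / (v j - e α) + 4 * g * ∑ β ∈ univ.erase α, 1 / (e α - e β) = 0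

/-- The part of the Richardson equation at `e α` that is analytic in `v k - e α` near `0`. -/
def externalField [Field K] (v d : J → K) (e : ι → K) (k : J) (C : Finset ι) (α : ι) : K :=
  ∑ j ∈ univ.erase k, d j / (e α - v j) + ∑ β ∈ Cᶜ, 1 / (e α - e β)

theorem IsRichardsonSolution.pow_mul_eq_zero [Field K] {v d : J → K} {g : K} {e : ι → K}
    (h : IsRichardsonSolution v d g e) {k : J} {C : Finset ι} {α : ι} (hα : α ∈ C)
    (hαk : e α ≠ v k) (p : ℕ) :
    (v k - e α) ^ (p + 1) - 4 * g * d k * (v k - e α) ^ p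
      + 4 * g * ((v k - e α) ^ (p + 1) * externalField v d e k C α)
      + 4 * g * ∑ β ∈ C.erase α, (v k - e α) ^ (p + 1) / (e α - e β) = 0 := by
  have hx : v k - e α ≠ 0 := sub_ne_zero.mpr hαk.symm
  have hpoles : ∑ j, d j / (v j - e α)
      = d k / (v k - e α) - ∑ j ∈ univ.erase k, d j / (e α - v j) := by
    rw [← add_sum_erase _ _ (mem_univ k), sub_eq_add_neg _ (∑ j ∈ _, _), ← sum_neg_distrib]
    simp only [← div_neg, neg_sub]
  have hroots : ∑ β ∈ univ.erase α, 1 / (e α - e β)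
      = ∑ β ∈ C.erase α, 1 / (e α - e β) + ∑ β ∈ Cᶜ, 1 / (e α - e β) := by
    rw [sum_erase_eq_sub (mem_univ α), sum_erase_eq_sub hα, ← sum_add_sum_compl C]
    ring
  have hk : (v k - e α) ^ (p + 1) * (d k / (v k - e α)) = d k * (v k - e α) ^ p := by
    field_simp
    ring
  have hintra : ∑ β ∈ C.erase α, (v k - e α) ^ (p + 1) / (e α - e β)
      = (v k - e α) ^ (p + 1) * ∑ β ∈ C.erase α, 1 / (e α - e β) := by
    simp only [mul_sum, mul_one_div]
  have h := h α
  rw [hpoles, hroots] at h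
  rw [hintra, externalField]
  linear_combination (v k - e α) ^ (p + 1) * h + 4 * g * hk

theorem IsRichardsonSolution.sum_pow_mul_eq_zero [Field K] {v d : J → K} {g : K} {e : ι → K}
    (h : IsRichardsonSolution v d g e) {k : J} {C : Finset ι} (hC : ∀ α ∈ C, e α ≠ v k) (p : ℕ) :
    powerSum C (fun α ↦ v k - e α) (p + 1) - 4 * g * d k * powerSum C (fun α ↦ v k - e α) p
      + 4 * g * ∑ α ∈ C, (v k - e α) ^ (p + 1) * externalField v d e k C α
      + 4 * g * ∑ α ∈ C, ∑ β ∈ C.erase α, (v k - e α) ^ (p + 1) / (e α - e β) = 0 := by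
  have := sum_eq_zero fun α hα ↦ h.pow_mul_eq_zero hα (hC α hα) p
  simpa only [powerSum, sum_add_distrib, sum_sub_distrib, ← mul_sum] using this

theorem IsRichardsonSolution.powerSum_identity [Field K] {v d : J → K} {g : K} {e : ι → K}
    (h : IsRichardsonSolution v d g e) {k : J} {C : Finset ι} (hC : ∀ α ∈ C, e α ≠ v k)
    (hinj : Set.InjOn e C) (hcluster : (#C : K) = 1 - 2 * d k) {p : ℕ} (hp : 2 ≤ p) :
    powerSum C (fun α ↦ v k - e α) p
      - 2 * g * ((#C : K) + 1 - p) * powerSum C (fun α ↦ v k - e α) (p - 1)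
      - 2 * g * ∑ i ∈ Icc 1 (p - 2),
          powerSum C (fun α ↦ v k - e α) (p - i - 1) * powerSum C (fun α ↦ v k - e α) i
      + 4 * g * ∑ α ∈ C, (v k - e α) ^ p * externalField v d e k C α = 0 := by
  obtain ⟨q, rfl⟩ : ∃ q, p = q + 2 := ⟨p - 2, by omega⟩
  have hsum := h.sum_pow_mul_eq_zero hC (q + 1)
  have hsym := two_mul_sum_sum_erase_pow_div_sub (x := fun α ↦ v k - e α)
    (sub_right_injective.comp_injOn hinj) (q + 2)
  simp only [sub_sub_sub_cancel_left, sum_range_add_two, show q + 2 - 1 = q + 1 from rfl,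
    Nat.sub_zero, Nat.sub_self, powerSum_zero] at hsym
  simp only [show q + 2 - 1 = q + 1 from rfl, Nat.add_sub_cancel]
  generalize powerSum C (fun α ↦ v k - e α) = S at hsum hsym ⊢
  have hreindex : ∑ i ∈ Icc 1 q, S i * S (q + 1 - i) = ∑ i ∈ Icc 1 q, S (q + 2 - i - 1) * S i :=
    sum_congr rfl fun i _ ↦ by rw [mul_comm, Nat.sub_right_comm]; rfl
  rw [hreindex] at hsym
  push_cast at hsym ⊢
  linear_combination hsum - 2 * g * hsym + 2 * g * S (q + 1) * hcluster

theorem hasSum_powerSum_mul_coeff_externalField [NormedField K] {v d : J → K} {e : ι → K} {k : J}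
    {C : Finset ι}
    (hpoles : ∀ α ∈ C, ∀ j ≠ k, ‖v k - e α‖ < ‖v k - v j‖)
    (hroots : ∀ α ∈ C, ∀ β ∉ C, ‖v k - e α‖ < ‖v k - e β‖) (m : ℕ) :
    HasSum (fun n ↦ powerSum C (fun α ↦ v k - e α) (m + n) *
        (∑ j ∈ univ.erase k, d j / (v k - v j) ^ (n + 1) + ∑ β ∈ Cᶜ, 1 / (v k - e β) ^ (n + 1)))
      (∑ α ∈ C, (v k - e α) ^ m * externalField v d e k C α) := by
  have hα : ∀ α ∈ C, HasSum (fun n ↦ (v k - e α) ^ (m + n) *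
      (∑ j ∈ univ.erase k, d j / (v k - v j) ^ (n + 1) + ∑ β ∈ Cᶜ, 1 / (v k - e β) ^ (n + 1)))
      ((v k - e α) ^ m * externalField v d e k C α) := by
    intro α hα
    have h₁ := hasSum_pow_add_mul_sum_div_pow_succ (univ.erase k) d (fun j ↦ v k - v j)
      (fun j hj ↦ hpoles α hα j (ne_of_mem_erase hj)) m
    have h₂ := hasSum_pow_add_mul_sum_div_pow_succ Cᶜ (fun _ ↦ 1) (fun β ↦ v k - e β)
      (fun β hβ ↦ hroots α hα β (mem_compl.mp hβ)) m
    simpa only [mul_add, externalField, sub_sub_sub_cancel_left] using h₁.add h₂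
  simpa only [powerSum, sum_mul] using hasSum_sum hα

end Richardson

theorem stmt_5_general
    (M L : ℕ) (η : Fin L → ℝ) (d : Fin L → ℝ)
    (g : ℝ) (e : Fin M → ℂ)
    (he : Function.Injective e)
    (hed : ∀ α j, e α ≠ 2 * (η j : ℂ))
    (hrich : ∀ α, (1 : ℂ) - 4 * g * ∑ j, (d j : ℂ) / (2 * (η j : ℂ) - e α)
        + 4 * g * ∑ β ∈ univ.erase α, 1 / (e α - e β) = 0)
    (k : Fin L) (C : Finset (Fin M)) (Mk : ℕ) (hMk : C.card = Mk)
    (hCne : C.Nonempty)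
    (hcluster : (Mk : ℝ) = 1 - 2 * d k)
    (S : ℕ → ℂ) (hS : ∀ q, S q = ∑ α ∈ C, (2 * (η k : ℂ) - e α) ^ q)
    (P : ℕ → ℂ)
    (hP : ∀ n, P n = ∑ j ∈ univ.erase k, (d j : ℂ) / (2 * (η k : ℂ) - 2 * (η j : ℂ)) ^ (n + 1)
        + ∑ β ∈ Cᶜ, 1 / (2 * (η k : ℂ) - e β) ^ (n + 1))
    (hmaxη : ∀ j, j ≠ k →
      (C.sup' hCne fun α => ‖2 * (η k : ℂ) - e α‖) < ‖2 * (η k : ℂ) - 2 * (η j : ℂ)‖)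
    (hmaxe : ∀ β, β ∉ C →
      (C.sup' hCne fun α => ‖2 * (η k : ℂ) - e α‖) < ‖2 * (η k : ℂ) - e β‖)
    (p : ℕ) (hp : 2 ≤ p) :
    (Summable fun n : ℕ => ‖S (p + n) * P n‖) ∧
      S p - 2 * g * ((Mk : ℂ) + 1 - (p : ℂ)) * S (p - 1)
        - 2 * g * ∑ i ∈ Icc 1 (p - 2), S (p - i - 1) * S i
        + 4 * g * ∑' n : ℕ, S (p + n) * P n = 0 := by
  subst hMk
  obtain rfl : S = powerSum C fun α ↦ 2 * (η k : ℂ) - e α := funext hS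
  obtain rfl : P = fun n ↦ ∑ j ∈ univ.erase k, (d j : ℂ) / (2 * (η k : ℂ) - 2 * (η j : ℂ)) ^ (n + 1)
      + ∑ β ∈ Cᶜ, 1 / (2 * (η k : ℂ) - e β) ^ (n + 1) := funext hP
  have hle : ∀ α ∈ C, ‖2 * (η k : ℂ) - e α‖ ≤ C.sup' hCne fun α ↦ ‖2 * (η k : ℂ) - e α‖ :=
    fun α hα ↦ le_sup' (fun α ↦ ‖2 * (η k : ℂ) - e α‖) hα
  have hsum := hasSum_powerSum_mul_coeff_externalField
    (v := fun j ↦ 2 * (η j : ℂ)) (d := fun j ↦ (d j : ℂ))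
    (fun α hα j hj ↦ (hle α hα).trans_lt (hmaxη j hj))
    (fun α hα β hβ ↦ (hle α hα).trans_lt (hmaxe β hβ)) p
  refine ⟨summable_norm_iff.mpr hsum.summable, ?_⟩
  rw [hsum.tsum_eq]
  exact IsRichardsonSolution.powerSum_identity hrich (fun α _ ↦ hed α k) he.injOn
    (by exact_mod_cast hcluster) hp

/-- If the Richardson equations hold at coupling `g`, the cluster condition
`Mk = 1 - 2·d k` holds, and `max_{α∈C} |x α|` is smaller than `|2η k - 2η j|` for all
`j ≠ k` and than `|2η k - e β|` for all `β ∉ C`, then for every `p ≥ 2` the series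
`Σ_n S (p+n) · P n` converges absolutely and
`S p - 2g·(Mk+1-p)·S (p-1) - 2g·Σ_{i=1}^{p-2} S (p-i-1)·S i + 4g·Σ_n S (p+n)·P n = 0`. -/
theorem stmt_5
    (M L : ℕ) (hM : 1 ≤ M) (hL : 1 ≤ L)
    (η : Fin L → ℝ) (hη : Function.Injective η) (d : Fin L → ℝ)
    (g : ℝ) (e : Fin M → ℂ)
    (he : Function.Injective e)
    (hed : ∀ α j, e α ≠ 2 * (η j : ℂ))
    (hrich : ∀ α, (1 : ℂ) - 4 * g * ∑ j, (d j : ℂ) / (2 * (η j : ℂ) - e α)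
        + 4 * g * ∑ β ∈ univ.erase α, 1 / (e α - e β) = 0)
    (k : Fin L) (C : Finset (Fin M)) (Mk : ℕ) (hMk : C.card = Mk) (hMk1 : 1 ≤ Mk)
    (hCne : C.Nonempty)
    (hcluster : (Mk : ℝ) = 1 - 2 * d k)
    (S : ℕ → ℂ) (hS : ∀ q, S q = ∑ α ∈ C, (2 * (η k : ℂ) - e α) ^ q)
    (P : ℕ → ℂ)
    (hP : ∀ n, P n = ∑ j ∈ univ.erase k, (d j : ℂ) / (2 * (η k : ℂ) - 2 * (η j : ℂ)) ^ (n + 1)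
        + ∑ β ∈ Cᶜ, 1 / (2 * (η k : ℂ) - e β) ^ (n + 1))
    (hmaxη : ∀ j, j ≠ k →
      (C.sup' hCne fun α => ‖2 * (η k : ℂ) - e α‖) < ‖2 * (η k : ℂ) - 2 * (η j : ℂ)‖)
    (hmaxe : ∀ β, β ∉ C →
      (C.sup' hCne fun α => ‖2 * (η k : ℂ) - e α‖) < ‖2 * (η k : ℂ) - e β‖)
    (p : ℕ) (hp : 2 ≤ p) :
    (Summable fun n : ℕ => ‖S (p + n) * P n‖) ∧
      S p - 2 * g * ((Mk : ℂ) + 1 - (p : ℂ)) * S (p - 1)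
        - 2 * g * ∑ i ∈ Icc 1 (p - 2), S (p - i - 1) * S i
        + 4 * g * ∑' n : ℕ, S (p + n) * P n = 0 :=
  stmt_5_general M L η d g e he hed hrich k C Mk hMk hCne hcluster S hS P hP hmaxη hmaxe p hp
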